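/- Let n ≥ 2 and 1 ≤ i < j < k ≤ n. For a pair a < b let E_{ab} be the ℤ-linear endomorphism of ℤ[S_n] defined on basis elements by E_{ab}(w) = w·t_{ab} if ℓ(w·t_{ab}) < ℓ(w) and E_{ab}(w) = 0 otherwise. Then for every w ∈ S_n, the identity E_{jk}(E_{ij}(w)) = E_{ik}(E_{jk}(w)) + E_{ij}(E_{ik}(w)) holds in ℤ[S_n]. (This is the compatibility of the extended Bruhat action with the Fomin–Kirillov relation [ij][jk] = [jk][ik] + [ik][ij].) -/

import Mathlib

/-- Number of inversions (the length) of a permutation of `Fin n`. -/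
def invLen (n : ℕ) (w : Equiv.Perm (Fin n)) : ℕ :=
  (Finset.univ.filter (fun p : Fin n × Fin n => p.1 < p.2 ∧ w p.2 < w p.1)).card

/-- The "extended Bruhat action" operator `E_{ij}` on `ℤ[S_n]`:
on a basis element `w` it is `w * t_{ij}` if the length decreases, and `0` otherwise. -/
noncomputable def Eij (n : ℕ) (i j : Fin n) :
    MonoidAlgebra ℤ (Equiv.Perm (Fin n)) →ₗ[ℤ] MonoidAlgebra ℤ (Equiv.Perm (Fin n)) :=
  Finsupp.lift (MonoidAlgebra ℤ (Equiv.Perm (Fin n))) ℤ (Equiv.Perm (Fin n))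
    (fun w => if invLen n (w * Equiv.swap i j) < invLen n w
      then MonoidAlgebra.single (w * Equiv.swap i j) (1 : ℤ) else 0) ∘ₗ
    (MonoidAlgebra.coeffLinearEquiv ℤ).toLinearMap
open Equiv Finset

/-!
Right multiplication by `t_{ab}` (`a < b`) exchanges the values at positions `a` and `b`, so it
lowers the length exactly when `w b < w a`. Hence `E_{cd} E_{ab} w` is `w t_{ab} t_{cd}` or `0`
according to two comparisons of values of `w`. For `i < j < k` the three composites
`t_{ij} t_{jk}`, `t_{jk} t_{ik}`, `t_{ik} t_{ij}` are the same 3-cycle, and the left-hand side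
survives iff `w i` exceeds `w j` and `w k`, which splits into the two orders of `w j`, `w k`
selecting exactly one of the two terms on the right.
-/

theorem ite_zero_eq_ite_zero_add_ite_zero {M : Type*} [AddZeroClass M] {P Q R : Prop}
    [Decidable P] [Decidable Q] [Decidable R] (hPQR : P ↔ Q ∨ R) (hQR : ¬(Q ∧ R)) (x : M) :
    (if P then x else 0) = (if Q then x else 0) + (if R then x else 0) := by
  by_cases hQ : Q <;> by_cases hR : R <;> simp_all

section

variable {n : ℕ}

/-- An inversion `p` of `w * t_{ab}` is sent to `(t_{ab} p.1, t_{ab} p.2)` if `t_{ab}` keeps its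
order and to itself otherwise; this injects the inversions of `w * t_{ab}` into those of `w`
other than `(a, b)`. -/
theorem invLen_mul_swap_lt (w : Perm (Fin n)) {a b : Fin n} (hab : a < b) (h : w b < w a) :
    invLen n (w * swap a b) < invLen n w := by
  let f : Fin n × Fin n → Fin n × Fin n := fun p =>
    if swap a b p.1 < swap a b p.2 then (swap a b p.1, swap a b p.2) else p
  refine (card_le_card_of_injOn f ?_ ?_).trans_lt (card_erase_lt_of_mem (a := (a, b)) ?_)
  · rintro ⟨p₁, p₂⟩ hp
    simp only [coe_filter, mem_univ, true_and, Set.mem_ofPred_eq, Perm.mul_apply, coe_erase,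
      Set.mem_sdiff, Set.mem_singleton_iff, f] at hp ⊢
    simp only [swap_apply_def] at *
    split_ifs at * <;> grind
  · rintro ⟨p₁, p₂⟩ hp ⟨q₁, q₂⟩ hq hpq
    simp only [coe_filter, mem_univ, true_and, Set.mem_ofPred_eq, f] at hp hq hpq
    split_ifs at hpq <;> grind [swap_apply_self]
  · simp [hab, h]

theorem invLen_mul_swap_lt_iff (w : Perm (Fin n)) {a b : Fin n} (hab : a < b) :
    invLen n (w * swap a b) < invLen n w ↔ w b < w a := by
  refine ⟨fun hlt => ?_, invLen_mul_swap_lt w hab⟩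
  by_contra! hle
  have hwab : w a < w b := hle.lt_of_ne (w.injective.ne hab.ne)
  have hgt := invLen_mul_swap_lt (w * swap a b) hab (by simpa using hwab)
  rw [mul_swap_mul_self] at hgt
  exact hlt.asymm hgt

theorem Eij_single (w : Perm (Fin n)) {a b : Fin n} (hab : a < b) :
    Eij n a b (MonoidAlgebra.single w 1) =
      if w b < w a then MonoidAlgebra.single (w * swap a b) 1 else 0 := by
  simp [Eij, invLen_mul_swap_lt_iff w hab]

theorem Eij_Eij_single (w : Perm (Fin n)) {a b c d : Fin n} (hab : a < b) (hcd : c < d) :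
    Eij n c d (Eij n a b (MonoidAlgebra.single w 1)) =
      if w b < w a ∧ w (swap a b d) < w (swap a b c) then
        MonoidAlgebra.single (w * swap a b * swap c d) 1 else 0 := by
  rw [Eij_single w hab]
  by_cases h : w b < w a
  · rw [if_pos h, Eij_single _ hcd]
    exact if_congr (and_iff_right h).symm rfl rfl
  · rw [if_neg h, map_zero, if_neg (fun h' => h h'.1)]

end

theorem Eij_fk_rel1_general (n : ℕ) (i j k : Fin n) (hij : i < j) (hjk : j < k)
    (w : Equiv.Perm (Fin n)) :
    Eij n j k (Eij n i j (MonoidAlgebra.single w (1 : ℤ))) =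
      Eij n i k (Eij n j k (MonoidAlgebra.single w (1 : ℤ))) +
        Eij n i j (Eij n i k (MonoidAlgebra.single w (1 : ℤ))) := by
  have hik := hij.trans hjk
  have hcycle₁ : swap j k * swap i k = swap i j * swap j k := by
    rw [mul_swap_eq_swap_mul, swap_apply_of_ne_of_ne hij.ne hik.ne, swap_apply_right]
  have hcycle₂ : swap i k * swap i j = swap i j * swap j k := by
    rw [mul_swap_eq_swap_mul (swap i j), swap_apply_right, swap_apply_of_ne_of_ne hik.ne' hjk.ne']
  rw [Eij_Eij_single w hij hjk, Eij_Eij_single w hjk hik, Eij_Eij_single w hik hij,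
    mul_assoc, mul_assoc, mul_assoc, hcycle₁, hcycle₂]
  simp only [swap_apply_left, swap_apply_right, swap_apply_of_ne_of_ne hik.ne' hjk.ne',
    swap_apply_of_ne_of_ne hij.ne hik.ne, swap_apply_of_ne_of_ne hij.ne' hjk.ne]
  have hwjk := w.injective.ne hjk.ne
  exact ite_zero_eq_ite_zero_add_ite_zero (by grind) (by grind) _

/-- Compatibility of the extended Bruhat action with the Fomin–Kirillov relation
`[ij][jk] = [jk][ik] + [ik][ij]`: for every basis element `w`,
`E_{jk}(E_{ij}(w)) = E_{ik}(E_{jk}(w)) + E_{ij}(E_{ik}(w))`. -/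
theorem Eij_fk_rel1 (n : ℕ) (hn : 2 ≤ n) (i j k : Fin n) (hij : i < j) (hjk : j < k)
    (w : Equiv.Perm (Fin n)) :
    Eij n j k (Eij n i j (MonoidAlgebra.single w (1 : ℤ))) =
      Eij n i k (Eij n j k (MonoidAlgebra.single w (1 : ℤ))) +
        Eij n i j (Eij n i k (MonoidAlgebra.single w (1 : ℤ))) :=
  Eij_fk_rel1_general n i j k hij hjk w
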